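/- arXiv:1401.7929 — 3 statements merged into one kernel-verified Lean document; each statement's English description precedes it below -/
import Mathlib

section
/- Let d ≥ 1 and let G = C_{m_1} □ C_{m_2} □ ... □ C_{m_d} be the Cartesian product of d cycles with m_i ≥ 2d+1 for all i. Then G is not (2d)^{d-1}·(2d+1)-path-pairable; more precisely, the subgrid G_0 = C_{2d} □ ... □ C_{2d} □ C_{2d+1} (embedded in G) induces a vertex set S with |S| = (2d)^{d-1}·(2d+1) vertices whose edge boundary satisfies d(S) < |S|, violating the cut-condition. -/
open SimpleGraph
open scoped Classical

/-- A graph `G` (on at least `2k` vertices) is `k`-path-pairable if for every choice of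
`2k` pairwise distinct terminals `x 0, …, x (k-1), y 0, …, y (k-1)` there are `k`
pairwise edge-disjoint paths, the `i`-th one joining `x i` to `y i`. -/
def PathPairable {V : Type*} [Fintype V] (G : SimpleGraph V) (k : ℕ) : Prop :=
  2 * k ≤ Fintype.card V ∧
    ∀ x y : Fin k → V, Function.Injective (Sum.elim x y) →
      ∃ p : (i : Fin k) → G.Walk (x i) (y i),
        (∀ i, (p i).IsPath) ∧
          ∀ i j : Fin k, i ≠ j → List.Disjoint (p i).edges (p j).edges

/-- `edgeCut G S` is `d(S)`: the number of edges of `G` with exactly one endpoint in `S`. -/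
noncomputable def edgeCut {V : Type*} [Fintype V] (G : SimpleGraph V) (S : Finset V) : ℕ :=
  (G.edgeSet.toFinite.toFinset.filter fun e => ∃ u v : V, e = s(u, v) ∧ u ∈ S ∧ v ∉ S).card

/-- `inducedEdges G S` is `e(S)`: the number of edges of `G` with both endpoints in `S`,
i.e. the number of edges of the subgraph of `G` induced on `S`. -/
noncomputable def inducedEdges {V : Type*} [Fintype V] (G : SimpleGraph V) (S : Finset V) : ℕ :=
  (G.edgeSet.toFinite.toFinset.filter fun e => ∃ u v : V, e = s(u, v) ∧ u ∈ S ∧ v ∈ S).card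

/-- The Cartesian product of `d` cycles `C_{m 0} □ ⋯ □ C_{m (d-1)}`:
two tuples are adjacent iff they agree in all coordinates except one,
where they are adjacent on the corresponding cycle. -/
def torusGrid (d : ℕ) (m : Fin d → ℕ) : SimpleGraph ((i : Fin d) → Fin (m i)) :=
  SimpleGraph.fromRel (fun x y =>
    ∃ j : Fin d, (SimpleGraph.cycleGraph (m j)).Adj (x j) (y j) ∧ ∀ i, i ≠ j → x i = y i)

/-!
Let `S` be the subgrid `[0, 2d)^(d-1) × [0, 2d+1)`, with side lengths `b j`. A boundary edge of
`S` in direction `j` leaves `S` from one of its two faces orthogonal to `j`, and each vertex on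
such a face has only one outgoing edge in direction `j`, so
`d(S) ≤ ∑ⱼ 2|S|/b j = |S| ((d-1)/d + 2/(2d+1)) < |S|`. On the other hand `k`-path-pairability
forces the cut condition `|S| ≤ d(S)` whenever `|S| ≤ k`: route paths from every vertex of `S`
to terminals outside `S`; each path uses its own boundary edge.
-/

namespace SimpleGraph

variable {V : Type*} [Fintype V] {G : SimpleGraph V} {S : Finset V}

noncomputable def cutEdges (G : SimpleGraph V) (S : Finset V) : Finset (Sym2 V) :=
  G.edgeSet.toFinite.toFinset.filter fun e => ∃ u v : V, e = s(u, v) ∧ u ∈ S ∧ v ∉ S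

theorem edgeCut_eq_card_cutEdges : edgeCut G S = (cutEdges G S).card := rfl

theorem mem_cutEdges {e : Sym2 V} :
    e ∈ cutEdges G S ↔ e ∈ G.edgeSet ∧ ∃ u v : V, e = s(u, v) ∧ u ∈ S ∧ v ∉ S := by
  rw [cutEdges, Finset.mem_filter, Set.Finite.mem_toFinset]

theorem Dart.edge_mem_cutEdges (d : G.Dart) (h₁ : d.fst ∈ S) (h₂ : d.snd ∉ S) :
    d.edge ∈ cutEdges G S :=
  mem_cutEdges.2 ⟨d.edge_mem, d.fst, d.snd, rfl, h₁, h₂⟩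

theorem card_le_edgeCut_of_pathPairable {k : ℕ} (hG : PathPairable G k) (hS : S.card ≤ k) :
    S.card ≤ edgeCut G S := by
  obtain ⟨hk, hpair⟩ := hG
  -- Sinks: a `k`-set `A` outside `S`; sources: a `k`-set `B` with `S ⊆ B ⊆ Aᶜ`. The paths
  -- starting in `S` then leave `S` through pairwise distinct edges.
  obtain ⟨A, hAS, hA⟩ := Finset.exists_subset_card_eq (s := Sᶜ) (n := k)
    (by rw [Finset.card_compl]; omega)
  obtain ⟨B, hSB, hBA, hB⟩ := Finset.exists_subsuperset_card_eq (n := k)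
    (Finset.subset_compl_comm.1 hAS) hS (by rw [Finset.card_compl]; omega)
  set eA := A.equivFinOfCardEq hA
  set eB := B.equivFinOfCardEq hB
  have hdisj : ∀ i j, (eB.symm i : V) ≠ eA.symm j := fun i j h =>
    Finset.mem_compl.1 (hBA (eB.symm i).2) (h ▸ (eA.symm j).2)
  obtain ⟨p, -, hp⟩ := hpair (fun i => eB.symm i) (fun i => eA.symm i)
    (Function.Injective.sumElim (Subtype.val_injective.comp eB.symm.injective)
      (Subtype.val_injective.comp eA.symm.injective) hdisj)
  have hcross : ∀ s : S, ∃ d ∈ (p (eB ⟨s, hSB s.2⟩)).darts, d.fst ∈ S ∧ d.snd ∉ S := fun s =>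
    (p _).exists_boundary_dart (S : Set V) (by simp)
      fun h => Finset.mem_compl.1 (hAS (eA.symm _).2) h
  choose d hdp hdS using hcross
  rw [edgeCut_eq_card_cutEdges, ← Finset.card_attach (s := S)]
  refine Finset.card_le_card_of_injOn (fun s => (d s).edge)
    (fun s _ => (d s).edge_mem_cutEdges (hdS s).1 (hdS s).2) fun s _ t _ hst => ?_
  by_contra hne
  have hne' : eB ⟨s, hSB s.2⟩ ≠ eB ⟨t, hSB t.2⟩ := fun h =>
    hne (Subtype.ext (congrArg Subtype.val (eB.injective h) :))
  have hst' : (d s).edge = (d t).edge := hst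
  exact hp _ _ hne' (List.mem_map_of_mem (hdp s)) (hst' ▸ List.mem_map_of_mem (hdp t))

theorem not_pathPairable_of_edgeCut_lt {k : ℕ} (hS : S.card ≤ k) (hcut : edgeCut G S < S.card) :
    ¬ PathPairable G k := fun hG =>
  (card_le_edgeCut_of_pathPairable hG hS).not_gt hcut

end SimpleGraph

theorem Fin.val_sub_eq_one_iff {n : ℕ} {u v : Fin n} :
    ((u - v : Fin n) : ℕ) = 1 ↔ (v : ℕ) + 1 = u ∨ ((u : ℕ) = 0 ∧ (v : ℕ) + 1 = n ∧ 2 ≤ n) := by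
  have := u.isLt
  have := v.isLt
  rw [Fin.val_sub]
  rcases Nat.lt_or_ge (n - v + u) n with h | h
  · rw [Nat.mod_eq_of_lt h]; omega
  · rw [Nat.mod_eq_sub_mod h]
    rcases Nat.lt_or_ge (n - v + u - n) n with h' | h'
    · rw [Nat.mod_eq_of_lt h']; omega
    · omega

theorem SimpleGraph.cycleGraph_adj_iff_val {n : ℕ} {u v : Fin n} :
    (cycleGraph n).Adj u v ↔ (u : ℕ) + 1 = v ∨ (v : ℕ) + 1 = u ∨
      ((u : ℕ) = 0 ∧ (v : ℕ) + 1 = n ∧ 2 ≤ n) ∨ ((v : ℕ) = 0 ∧ (u : ℕ) + 1 = n ∧ 2 ≤ n) := by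
  rw [cycleGraph_adj', Fin.val_sub_eq_one_iff, Fin.val_sub_eq_one_iff]
  tauto

theorem Fin.card_filter_val_eq_zero_or_succ_eq {n c : ℕ} (h2 : 2 ≤ c) (h : c ≤ n) :
    (Finset.univ.filter fun a : Fin n => (a : ℕ) = 0 ∨ (a : ℕ) + 1 = c).card = 2 := by
  have : (Finset.univ.filter fun a : Fin n => (a : ℕ) = 0 ∨ (a : ℕ) + 1 = c)
      = {⟨0, by omega⟩, ⟨c - 1, by omega⟩} := by
    ext a
    simp only [Finset.mem_filter, Finset.mem_univ, true_and, Finset.mem_insert,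
      Finset.mem_singleton, Fin.ext_iff]
    omega
  rw [this, Finset.card_pair (by simp [Fin.ext_iff]; omega)]

section Box

variable {ι : Type*} [Fintype ι] [DecidableEq ι] {m : ι → ℕ}

def box (m b : ι → ℕ) : Finset ((i : ι) → Fin (m i)) :=
  Finset.univ.filter fun x => ∀ i, (x i : ℕ) < b i

def boxFace (m b : ι → ℕ) (j : ι) : Finset ((i : ι) → Fin (m i)) :=
  (box m b).filter fun x => (x j : ℕ) = 0 ∨ (x j : ℕ) + 1 = b j

theorem card_box {b : ι → ℕ} (hbm : ∀ i, b i ≤ m i) : (box m b).card = ∏ i, b i := by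
  have : box m b =
      Fintype.piFinset fun i => Finset.univ.filter fun a : Fin (m i) => (a : ℕ) < b i := by
    ext x
    simp [box]
  rw [this, Fintype.card_piFinset]
  exact Finset.prod_congr rfl fun i _ => by rw [Fin.card_filter_val_lt, min_eq_right (hbm i)]

theorem card_boxFace {b : ι → ℕ} (hbm : ∀ i, b i ≤ m i) {j : ι} (hj : 2 ≤ b j) :
    (boxFace m b j).card = 2 * ∏ i ∈ Finset.univ.erase j, b i := by
  set side : (i : ι) → Finset (Fin (m i)) := fun i => Finset.univ.filter fun a => (a : ℕ) < b i
  set ends : Finset (Fin (m j)) := Finset.univ.filter fun a => (a : ℕ) = 0 ∨ (a : ℕ) + 1 = b j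
  have : boxFace m b j = Fintype.piFinset (Function.update side j ends) := by
    ext x
    simp only [boxFace, box, Finset.mem_filter, Finset.mem_univ, true_and, Fintype.mem_piFinset]
    constructor
    · rintro ⟨hx, hxj⟩ i
      rcases eq_or_ne i j with rfl | hi
      · simpa [ends] using hxj
      · simpa [Function.update_of_ne hi, side] using hx i
    · intro hx
      have hxj : (x j : ℕ) = 0 ∨ (x j : ℕ) + 1 = b j := by simpa [ends] using hx j
      refine ⟨fun i => ?_, hxj⟩
      rcases eq_or_ne i j with rfl | hi
      · omega
      · simpa [Function.update_of_ne hi, side] using hx i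
  rw [this, Fintype.card_piFinset, ← Finset.mul_prod_erase _ _ (Finset.mem_univ j),
    Function.update_self, Fin.card_filter_val_eq_zero_or_succ_eq hj (hbm j)]
  refine congrArg _ (Finset.prod_congr rfl fun i hi => ?_)
  rw [Function.update_of_ne (Finset.ne_of_mem_erase hi), Fin.card_filter_val_lt,
    min_eq_right (hbm i)]

end Box

section Torus

variable {d : ℕ} {m : Fin d → ℕ}

theorem torusGrid_adj {x y : (i : Fin d) → Fin (m i)} :
    (torusGrid d m).Adj x y ↔
      ∃ j, (cycleGraph (m j)).Adj (x j) (y j) ∧ ∀ i, i ≠ j → x i = y i := by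
  rw [torusGrid, fromRel_adj]
  constructor
  · rintro ⟨-, ⟨j, hj, hx⟩ | ⟨j, hj, hx⟩⟩
    · exact ⟨j, hj, hx⟩
    · exact ⟨j, hj.symm, fun i hi => (hx i hi).symm⟩
  · rintro ⟨j, hj, hx⟩
    exact ⟨fun h => hj.ne (congrFun h j), Or.inl ⟨j, hj, hx⟩⟩

/-- The neighbour of `u` across the face of `box m b` in direction `j`: one step down from
coordinate `0` (wrapping around the cycle), otherwise the coordinate `b j`. The `% m j` only
makes the definition total. -/
def boxExit (b : Fin d → ℕ) (u : (i : Fin d) → Fin (m i)) (j : Fin d) : (i : Fin d) → Fin (m i) :=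
  Function.update u j ⟨(if (u j : ℕ) = 0 then m j - 1 else b j) % m j, Nat.mod_lt _ (u j).pos⟩

theorem exists_boxExit_of_adj {b : Fin d → ℕ} (hb : ∀ i, 2 ≤ b i) {u v : (i : Fin d) → Fin (m i)}
    (huv : (torusGrid d m).Adj u v) (hu : u ∈ box m b) (hv : v ∉ box m b) :
    ∃ j, u ∈ boxFace m b j ∧ v = boxExit b u j := by
  simp only [box, Finset.mem_filter, Finset.mem_univ, true_and, not_forall, not_lt] at hu hv
  obtain ⟨j, hadj, hrest⟩ := torusGrid_adj.1 huv
  obtain ⟨i, hvi⟩ := hv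
  obtain rfl : i = j := by
    by_contra hij
    exact (hu i).not_ge (hrest i hij ▸ hvi)
  have hvlt := (v i).isLt
  have hb2 := hb i
  have hui := hu i
  have hcases :
      ((u i : ℕ) + 1 = b i ∧ (v i : ℕ) = b i) ∨ ((u i : ℕ) = 0 ∧ (v i : ℕ) + 1 = m i) := by
    rw [cycleGraph_adj_iff_val] at hadj
    omega
  refine ⟨i, ?_, ?_⟩
  · simp only [boxFace, box, Finset.mem_filter, Finset.mem_univ, true_and]
    exact ⟨hu, by omega⟩
  · rw [boxExit, Function.eq_update_iff]
    refine ⟨Fin.ext ?_, fun k hk => (hrest k hk).symm⟩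
    change (v i : ℕ) = (if (u i : ℕ) = 0 then m i - 1 else b i) % m i
    rcases hcases with ⟨h1, h2⟩ | ⟨h1, h2⟩
    · rw [if_neg (by omega), Nat.mod_eq_of_lt (by omega)]; exact h2
    · rw [if_pos h1, Nat.mod_eq_of_lt (by omega)]; omega

theorem edgeCut_box_le {b : Fin d → ℕ} (hb : ∀ i, 2 ≤ b i) (hbm : ∀ i, b i ≤ m i) :
    edgeCut (torusGrid d m) (box m b) ≤ ∑ j, 2 * ∏ i ∈ Finset.univ.erase j, b i := by
  rw [edgeCut_eq_card_cutEdges]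
  calc (cutEdges (torusGrid d m) (box m b)).card
      ≤ (Finset.univ.sigma (boxFace m b)).card := by
        refine Finset.card_le_card_of_surjOn (fun p => s(p.2, boxExit b p.2 p.1)) ?_
        rintro e he
        obtain ⟨hE, u, v, rfl, hu, hv⟩ := mem_cutEdges.1 he
        replace hE : (torusGrid d m).Adj u v := hE
        obtain ⟨j, hj, rfl⟩ := exists_boxExit_of_adj hb hE hu hv
        exact ⟨⟨j, u⟩, Finset.mem_sigma.2 ⟨Finset.mem_univ j, hj⟩, rfl⟩
    _ = ∑ j, 2 * ∏ i ∈ Finset.univ.erase j, b i := by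
        rw [Finset.card_sigma]
        exact Finset.sum_congr rfl fun j _ => card_boxFace hbm (hb j)

end Torus

theorem sum_two_mul_prod_erase_lt {ι : Type*} [Fintype ι] [DecidableEq ι] {b : ι → ℕ}
    (hb : ∀ i, 0 < b i) (h : ∑ i, (2 : ℚ) / b i < 1) :
    ∑ j, 2 * ∏ i ∈ Finset.univ.erase j, b i < ∏ i, b i := by
  have hprod : ∀ j, ∏ i ∈ Finset.univ.erase j, (b i : ℚ) = (∏ i, (b i : ℚ)) / b j := fun j => by
    rw [eq_div_iff (by exact_mod_cast (hb j).ne'), Finset.prod_erase_mul _ _ (Finset.mem_univ j)]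
  have hpos : (0 : ℚ) < ∏ i, (b i : ℚ) := Finset.prod_pos fun i _ => by exact_mod_cast hb i
  suffices ∑ j, 2 * ∏ i ∈ Finset.univ.erase j, (b i : ℚ) < ∏ i, (b i : ℚ) by exact_mod_cast this
  calc ∑ j, 2 * ∏ i ∈ Finset.univ.erase j, (b i : ℚ)
      = (∏ i, (b i : ℚ)) * ∑ j, (2 : ℚ) / b j := by
        rw [Finset.mul_sum]
        exact Finset.sum_congr rfl fun j _ => by rw [hprod]; ring
    _ < ∏ i, (b i : ℚ) := mul_lt_of_lt_one_right hpos h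

/-- The side lengths `2d, …, 2d, 2d + 1` of the subgrid `C_{2d} □ ⋯ □ C_{2d} □ C_{2d+1}`. -/
def subgridSides (d : ℕ) (i : Fin d) : ℕ := if (i : ℕ) = d - 1 then 2 * d + 1 else 2 * d

theorem two_le_subgridSides {d : ℕ} (i : Fin d) : 2 ≤ subgridSides d i := by
  have := i.pos
  unfold subgridSides
  split_ifs <;> omega

theorem subgridSides_le {d : ℕ} (i : Fin d) : subgridSides d i ≤ 2 * d + 1 := by
  unfold subgridSides
  split_ifs <;> omega

theorem subgridSides_castSucc {n : ℕ} (i : Fin n) : subgridSides (n + 1) i.castSucc = 2 * (n + 1) :=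
  if_neg (by simp [i.isLt.ne])

theorem subgridSides_last (n : ℕ) : subgridSides (n + 1) (Fin.last n) = 2 * (n + 1) + 1 :=
  if_pos (by simp)

theorem prod_subgridSides (d : ℕ) :
    ∏ i, subgridSides d i = (2 * d) ^ (d - 1) * (2 * d + 1) := by
  cases d with
  | zero => simp
  | succ n =>
    simp [Fin.prod_univ_castSucc, subgridSides_castSucc, subgridSides_last]

theorem sum_two_div_subgridSides_lt_one (d : ℕ) : ∑ i, (2 : ℚ) / subgridSides d i < 1 := by
  cases d with
  | zero => simp
  | succ n =>
    simp only [Fin.sum_univ_castSucc, subgridSides_castSucc, subgridSides_last,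
      Finset.sum_const, Finset.card_univ, Fintype.card_fin, nsmul_eq_mul]
    push_cast
    rw [← sub_pos]
    field_simp
    ring_nf
    positivity

theorem torusGrid_not_pathPairable_general (d : ℕ) (m : Fin d → ℕ)
    (hm : ∀ i, 2 * d + 1 ≤ m i) :
    let S : Finset ((i : Fin d) → Fin (m i)) := Finset.univ.filter
      (fun x => ∀ i : Fin d, (x i : ℕ) < if (i : ℕ) = d - 1 then 2 * d + 1 else 2 * d)
    S.card = (2 * d) ^ (d - 1) * (2 * d + 1) ∧
      edgeCut (torusGrid d m) S < S.card ∧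
      ¬ PathPairable (torusGrid d m) ((2 * d) ^ (d - 1) * (2 * d + 1)) := by
  intro S
  -- the two filters differ only in their `Decidable` instances
  have hS : S = box m (subgridSides d) := by
    simp only [S, box, subgridSides]
    congr
  have hbm : ∀ i, subgridSides d i ≤ m i := fun i => (subgridSides_le i).trans (hm i)
  have hcard : S.card = (2 * d) ^ (d - 1) * (2 * d + 1) := by
    rw [hS, card_box hbm, prod_subgridSides]
  have hcut : edgeCut (torusGrid d m) S < S.card := by
    rw [hS, card_box hbm]
    exact (edgeCut_box_le two_le_subgridSides hbm).trans_lt <| sum_two_mul_prod_erase_lt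
      (fun i => two_pos.trans_le (two_le_subgridSides i)) (sum_two_div_subgridSides_lt_one d)
  exact ⟨hcard, hcut, not_pathPairable_of_edgeCut_lt hcard.le hcut⟩

/-- For `d ≥ 1` and cycles of lengths `m i ≥ 2d+1`, the subgrid
`C_{2d} □ ⋯ □ C_{2d} □ C_{2d+1}` embedded in the product induces a set `S` of
`(2d)^(d-1)·(2d+1)` vertices with `d(S) < |S|`, so the cut-condition fails and the
product of the cycles is not `(2d)^(d-1)·(2d+1)`-path-pairable. -/
theorem torusGrid_not_pathPairable (d : ℕ) (hd : 1 ≤ d) (m : Fin d → ℕ)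
    (hm : ∀ i, 2 * d + 1 ≤ m i) :
    let S : Finset ((i : Fin d) → Fin (m i)) := Finset.univ.filter
      (fun x => ∀ i : Fin d, (x i : ℕ) < if (i : ℕ) = d - 1 then 2 * d + 1 else 2 * d)
    S.card = (2 * d) ^ (d - 1) * (2 * d + 1) ∧
      edgeCut (torusGrid d m) S < S.card ∧
      ¬ PathPairable (torusGrid d m) ((2 * d) ^ (d - 1) * (2 * d + 1)) :=
  torusGrid_not_pathPairable_general d m hm
end

section
/- Let k ≥ 6 and let G be the graph obtained from the disjoint union of K_{1,k} and K_{k-1} by joining k−1 of the star's leaves to the k−1 vertices of K_{k-1} via a perfect matching, and joining the remaining leaf to an arbitrary vertex of K_{k-1}. Then G satisfies the cut-condition: for every S ⊆ V(G) with |S| ≤ ⌊|V(G)|/2⌋, d(S) ≥ |S|. -/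
open SimpleGraph
open scoped Classical

/-- The graph obtained from the disjoint union of the star `K_{1,k}`
(center `Sum.inl none`, leaves `Sum.inl (some i)`) and the complete graph `K_{k-1}`
(vertices `Sum.inr j`) by matching the leaves `some i` with `i < k-1` to the
vertices of `K_{k-1}` (leaf `i` to vertex `j` with `(i : ℕ) = (j : ℕ)`) and joining
the remaining leaf (`(i : ℕ) = k-1`) to the vertex `w` of `K_{k-1}`. -/
def starMatchedComplete (k : ℕ) (w : Fin (k - 1)) :
    SimpleGraph (Option (Fin k) ⊕ Fin (k - 1)) :=
  SimpleGraph.fromRel (fun x y =>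
    (x = Sum.inl none ∧ ∃ i, y = Sum.inl (some i)) ∨
    (∃ a b : Fin (k - 1), a ≠ b ∧ x = Sum.inr a ∧ y = Sum.inr b) ∨
    (∃ (i : Fin k) (j : Fin (k - 1)), x = Sum.inl (some i) ∧ y = Sum.inr j ∧
      ((i : ℕ) = (j : ℕ) ∨ ((i : ℕ) = k - 1 ∧ j = w))))

/-!
If every vertex outside `S` has a neighbour in `S` (`S` is dominating), choosing one such edge
per outside vertex gives `|Sᶜ| ≥ |S|` distinct cut edges; if instead every vertex of `S` has a
neighbour outside `S` (`Sᶜ` is dominating), the same count gives `|S|` cut edges. In this graph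
one of the two always holds when `|S| ≤ k`, by a case split on whether the centre lies in `S`
and how `S` meets the clique.
-/

namespace SimpleGraph

variable {V : Type*} [Fintype V] (G : SimpleGraph V)

def IsDominating (S : Finset V) : Prop :=
  ∀ v ∉ S, ∃ u ∈ S, G.Adj v u

theorem edgeCut_compl [DecidableEq V] (S : Finset V) : edgeCut G Sᶜ = edgeCut G S := by
  unfold edgeCut
  congr 1
  ext e
  simp only [Finset.mem_filter, and_congr_right_iff]
  refine fun _ => ⟨?_, ?_⟩ <;>
  · rintro ⟨u, v, rfl, hu, hv⟩
    exact ⟨v, u, Sym2.eq_swap, by simpa using hv, by simpa using hu⟩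

theorem isDominating_compl_iff [DecidableEq V] {S : Finset V} :
    G.IsDominating Sᶜ ↔ ∀ v ∈ S, ∃ u ∉ S, G.Adj v u := by
  simp [IsDominating]

variable {G}

theorem IsDominating.card_compl_le_edgeCut [DecidableEq V] {S : Finset V}
    (hS : G.IsDominating S) :
    Sᶜ.card ≤ edgeCut G S := by
  choose! f hfS hadj using hS
  refine Finset.card_le_card_of_injOn (fun v => s(v, f v)) (fun v hv => ?_)
    fun v hv v' hv' h => ?_
  · have hv : v ∉ S := by simpa using hv
    simp only [Finset.coe_filter, Set.Finite.mem_toFinset, mem_edgeSet, Set.mem_ofPred_eq]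
    exact ⟨hadj v hv, f v, v, Sym2.eq_swap, hfS v hv, hv⟩
  · have hv : v ∉ S := by simpa using hv
    have hv' : v' ∉ S := by simpa using hv'
    rcases Sym2.eq_iff.1 h with ⟨rfl, -⟩ | ⟨rfl, -⟩
    · rfl
    · exact absurd (hfS v' hv') hv

theorem card_le_edgeCut_of_isDominating_compl [DecidableEq V] {S : Finset V}
    (hS : G.IsDominating Sᶜ) :
    S.card ≤ edgeCut G S := by
  simpa [edgeCut_compl] using hS.card_compl_le_edgeCut

theorem card_le_edgeCut_of_isDominating [DecidableEq V] {S : Finset V} (hS : G.IsDominating S)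
    (hcard : S.card ≤ Fintype.card V / 2) : S.card ≤ edgeCut G S := by
  have := Finset.card_compl S
  have := hS.card_compl_le_edgeCut
  omega

end SimpleGraph

theorem Finset.exists_inl_notMem_of_card_lt {α β : Type*} [Fintype α] {S : Finset (α ⊕ β)}
    (hS : S.card < Fintype.card α) : ∃ a, Sum.inl a ∉ S := by
  by_contra! h
  have : (Finset.univ.map Function.Embedding.inl : Finset (α ⊕ β)) ⊆ S := by
    simpa [Finset.subset_iff] using h
  simpa using (Finset.card_le_card this).trans_lt hS

namespace starMatchedComplete

variable {k : ℕ} {w : Fin (k - 1)}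

theorem adj_leaf_center (i : Fin k) :
    (starMatchedComplete k w).Adj (Sum.inl (some i)) (Sum.inl none) := by
  simp [starMatchedComplete]

theorem adj_inr {a b : Fin (k - 1)} (h : a ≠ b) :
    (starMatchedComplete k w).Adj (Sum.inr a) (Sum.inr b) := by
  simp [starMatchedComplete, h]

variable (w) in
def partner (i : Fin k) : Fin (k - 1) :=
  if h : (i : ℕ) < k - 1 then ⟨i, h⟩ else w

theorem adj_leaf_partner (i : Fin k) :
    (starMatchedComplete k w).Adj (Sum.inl (some i)) (Sum.inr (partner w i)) := by
  unfold partner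
  split_ifs with h
  · simp [starMatchedComplete]
  · simp [starMatchedComplete]
    omega

theorem adj_inr_leaf (j : Fin (k - 1)) :
    (starMatchedComplete k w).Adj (Sum.inr j)
      (Sum.inl (some (Fin.castLE (Nat.sub_le k 1) j))) := by
  simp [starMatchedComplete]

variable {S : Finset (Option (Fin k) ⊕ Fin (k - 1))}

theorem isDominating_or_isDominating_compl_of_center_mem (hS : S.card ≤ k)
    (hc : Sum.inl none ∈ S) :
    (starMatchedComplete k w).IsDominating S ∨ (starMatchedComplete k w).IsDominating Sᶜ := by
  rw [SimpleGraph.isDominating_compl_iff]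
  by_cases hC : ∃ j, Sum.inr j ∈ S
  · obtain ⟨j, hj⟩ := hC
    left
    rintro ((_ | i) | j') hv
    · exact absurd hc hv
    · exact ⟨_, hc, adj_leaf_center i⟩
    · exact ⟨_, hj, adj_inr (by rintro rfl; exact hv hj)⟩
  · push Not at hC
    right
    rintro ((_ | i) | j) hv
    · obtain ⟨(_ | i), hi⟩ := S.exists_inl_notMem_of_card_lt (by simp [hS])
      · exact absurd hc hi
      · exact ⟨_, hi, (adj_leaf_center i).symm⟩
    · exact ⟨_, hC _, adj_leaf_partner i⟩
    · exact absurd hv (hC j)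

theorem isDominating_or_isDominating_compl_of_center_notMem (hc : Sum.inl none ∉ S) :
    (starMatchedComplete k w).IsDominating S ∨ (starMatchedComplete k w).IsDominating Sᶜ := by
  rw [SimpleGraph.isDominating_compl_iff]
  by_cases hC : ∃ j, Sum.inr j ∉ S
  · obtain ⟨j, hj⟩ := hC
    right
    rintro ((_ | i) | j') hv
    · exact absurd hv hc
    · exact ⟨_, hc, adj_leaf_center i⟩
    · exact ⟨_, hj, adj_inr (by rintro rfl; exact hj hv)⟩
  push Not at hC
  by_cases hL : ∃ i, Sum.inl (some i) ∈ S
  · obtain ⟨i, hi⟩ := hL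
    left
    rintro ((_ | i') | j) hv
    · exact ⟨_, hi, (adj_leaf_center i).symm⟩
    · exact ⟨_, hC _, adj_leaf_partner i'⟩
    · exact absurd (hC j) hv
  · push Not at hL
    right
    rintro ((_ | i) | j) hv
    · exact absurd hv hc
    · exact absurd hv (hL i)
    · exact ⟨_, hL _, adj_inr_leaf j⟩

theorem isDominating_or_isDominating_compl (hS : S.card ≤ k) :
    (starMatchedComplete k w).IsDominating S ∨ (starMatchedComplete k w).IsDominating Sᶜ := by
  by_cases hc : Sum.inl none ∈ S
  · exact isDominating_or_isDominating_compl_of_center_mem hS hc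
  · exact isDominating_or_isDominating_compl_of_center_notMem hc

end starMatchedComplete

theorem starMatchedComplete_cut_condition_general (k : ℕ) (w : Fin (k - 1)) :
    ∀ S : Finset (Option (Fin k) ⊕ Fin (k - 1)),
      S.card ≤ Fintype.card (Option (Fin k) ⊕ Fin (k - 1)) / 2 →
      S.card ≤ edgeCut (starMatchedComplete k w) S := by
  intro S hS
  have hV : Fintype.card (Option (Fin k) ⊕ Fin (k - 1)) = 2 * k := by
    simp only [Fintype.card_sum, Fintype.card_option, Fintype.card_fin]
    have := w.pos
    omega
  rcases starMatchedComplete.isDominating_or_isDominating_compl (w := w) (S := S) (by omega)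
    with h | h
  · exact SimpleGraph.card_le_edgeCut_of_isDominating h hS
  · exact SimpleGraph.card_le_edgeCut_of_isDominating_compl h

/-- For `k ≥ 6`, the graph obtained from `K_{1,k}` and `K_{k-1}` by the matching
construction satisfies the cut-condition: every set `S` of at most half of the
`2k` vertices has `d(S) ≥ |S|`. -/
theorem starMatchedComplete_cut_condition (k : ℕ) (hk : 6 ≤ k) (w : Fin (k - 1)) :
    ∀ S : Finset (Option (Fin k) ⊕ Fin (k - 1)),
      S.card ≤ Fintype.card (Option (Fin k) ⊕ Fin (k - 1)) / 2 →
      S.card ≤ edgeCut (starMatchedComplete k w) S :=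
  starMatchedComplete_cut_condition_general k w
end

section
/- The Cartesian product K_{1,b} □ K_{1,d} of two stars is not (⌈(b+d)/2⌉ + 1)-path-pairable. -/
open SimpleGraph
open scoped Classical

/-!
The vertices of `K_{1,n}` are its centre `Sum.inl 0` and its leaves `Sum.inr i`. Let `c` be
(centre, centre), `a = (i₀, centre)`, `r = (centre, j₀)` and `z = (i₀, j₀)`. Pair `c` with `z` and
`a` with `r`, and make every corner `(i, j₀)` and `(i₀, j)` a terminal. A corner has only two
neighbours, so a corner terminal lies on no other path: that path would use both edges at the
corner, one of which the corner's own path needs. Hence the `a`–`r` path leaves `a` and enters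
`r` through `c`. The `c`–`z` path reaches `z` through `a` or `r`, say `a`; it cannot use the edge
`ac`, so it meets `a` in two edges to corners, and one of these corners is an inner vertex of it.
-/

namespace SimpleGraph.Walk

variable {V : Type*} {G : SimpleGraph V}

theorem exists_mk_mem_edges_of_ne {u v : V} (q : G.Walk u v) (h : u ≠ v) :
    (∃ w, s(u, w) ∈ q.edges) ∧ ∃ w, s(v, w) ∈ q.edges :=
  ⟨⟨_, mk_start_snd_mem_edges (not_nil_of_ne h)⟩,
    ⟨_, Sym2.eq_swap ▸ mk_penultimate_end_mem_edges (not_nil_of_ne h)⟩⟩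

theorem IsTrail.exists_ne_mk_mem_edges {u v z : V} {q : G.Walk u v} (hq : q.IsTrail)
    (hz : z ∈ q.support) (hzu : z ≠ u) (hzv : z ≠ v) :
    ∃ w₁ w₂, w₁ ≠ w₂ ∧ s(z, w₁) ∈ q.edges ∧ s(z, w₂) ∈ q.edges := by
  have hfirst := mk_penultimate_end_mem_edges (not_nil_of_ne hzu.symm : ¬(q.takeUntil z hz).Nil)
  have hsecond := mk_start_snd_mem_edges (not_nil_of_ne hzv : ¬(q.dropUntil z hz).Nil)
  rw [Sym2.eq_swap] at hfirst
  refine ⟨_, _, fun h => ?_, q.edges_takeUntil_subset_edges hz hfirst,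
    q.edges_dropUntil_subset_edges hz hsecond⟩
  exact hq.disjoint_edges_takeUntil_dropUntil hz hfirst (h ▸ hsecond)

end SimpleGraph.Walk

section EdgeDisjointTrails

variable {V : Type*} {G : SimpleGraph V} {k : ℕ} {x y : Fin k → V}
  {p : (i : Fin k) → G.Walk (x i) (y i)}

theorem eq_or_eq_of_mem_support_of_neighborSet_subset (hp : ∀ i, (p i).IsTrail)
    (hdisj : ∀ i j, i ≠ j → (p i).edges.Disjoint (p j).edges) (hxy : ∀ i, x i ≠ y i)
    {z n₁ n₂ : V} (hN : G.neighborSet z ⊆ {n₁, n₂}) (hs : ∃ s, x s = z ∨ y s = z)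
    {t : Fin k} (hz : z ∈ (p t).support) : z = x t ∨ z = y t := by
  by_contra! hinner
  obtain ⟨s, hs⟩ := hs
  obtain ⟨w₁, w₂, hw, hw₁, hw₂⟩ := (hp t).exists_ne_mk_mem_edges hz hinner.1 hinner.2
  obtain ⟨w, hws⟩ : ∃ w, s(z, w) ∈ (p s).edges := by
    rcases hs with rfl | rfl
    exacts [((p s).exists_mk_mem_edges_of_ne (hxy s)).1,
      ((p s).exists_mk_mem_edges_of_ne (hxy s)).2]
  have hst : s ≠ t := by
    rintro rfl
    rcases hs with h | h
    exacts [hinner.1 h.symm, hinner.2 h.symm]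
  have hN₁ := hN ((p t).adj_of_mem_edges hw₁)
  have hN₂ := hN ((p t).adj_of_mem_edges hw₂)
  have hN₃ := hN ((p s).adj_of_mem_edges hws)
  have hwt : s(z, w) ∈ (p t).edges := by
    simp only [Set.mem_insert_iff, Set.mem_singleton_iff] at hN₁ hN₂ hN₃
    rcases hN₃ with rfl | rfl <;> rcases hN₁ with rfl | rfl <;> rcases hN₂ with rfl | rfl <;>
      first | assumption | exact absurd rfl hw
  exact hdisj s t hst hws hwt

end EdgeDisjointTrails

section Hub

variable {V : Type*} {G : SimpleGraph V}

theorem not_disjoint_edges_of_hub {c z a r : V} {P : G.Walk c z} {Q : G.Walk a r}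
    (hP : P.IsTrail) (hcz : c ≠ z) (hca : c ≠ a) (hcr : c ≠ r) (har : a ≠ r)
    (hz : G.neighborSet z ⊆ {a, r}) (hnadj : ¬ G.Adj a r)
    (hblock : ∀ u ∈ ({a, r} : Set V), ∀ w, G.Adj u w → w ≠ c →
      (w ∈ P.support → w = c ∨ w = z) ∧ (w ∈ Q.support → w = a ∨ w = r)) :
    ¬ P.edges.Disjoint Q.edges := by
  intro hPQ
  have hQ : ∀ u ∈ ({a, r} : Set V), s(u, c) ∈ Q.edges := by
    intro u hu
    obtain ⟨w, hw⟩ : ∃ w, s(u, w) ∈ Q.edges := by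
      rcases hu with rfl | rfl
      exacts [(Q.exists_mk_mem_edges_of_ne har).1, (Q.exists_mk_mem_edges_of_ne har).2]
    have hadj := Q.adj_of_mem_edges hw
    by_cases hwc : w = c
    · rwa [← hwc]
    exfalso
    rcases (hblock u hu w hadj hwc).2 (Q.snd_mem_support_of_mem_edges hw) with rfl | rfl <;>
      rcases hu with rfl | rfl
    exacts [hadj.ne rfl, hnadj hadj.symm, hnadj hadj, hadj.ne rfl]
  obtain ⟨u, huz, huP⟩ : ∃ u, G.Adj u z ∧ u ∈ P.support :=
    ⟨_, P.adj_penultimate (P.not_nil_of_ne hcz),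
      P.fst_mem_support_of_mem_edges (P.mk_penultimate_end_mem_edges (P.not_nil_of_ne hcz))⟩
  have hu : u ∈ ({a, r} : Set V) := hz huz.symm
  have huc : u ≠ c := by rcases hu with rfl | rfl <;> tauto
  obtain ⟨w₁, w₂, hw, hw₁, hw₂⟩ := hP.exists_ne_mk_mem_edges huP huc huz.ne
  have hwz : ∀ w, s(u, w) ∈ P.edges → w = z := fun w hwP => by
    have hwc : w ≠ c := by rintro rfl; exact hPQ hwP (hQ u hu)
    have := (hblock u hu w (P.adj_of_mem_edges hwP) hwc).1
      (P.snd_mem_support_of_mem_edges hwP)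
    tauto
  exact hw (by rw [hwz w₁ hw₁, hwz w₂ hw₂])

end Hub

theorem exists_injective_sumElim_of_nodup {V : Type*} [Fintype V] {k : ℕ} {L : List V}
    (hL : L.Nodup) (hk : 2 * k ≤ Fintype.card V) (hlen : L.length ≤ 2 * k) :
    ∃ x y : Fin k → V, Function.Injective (Sum.elim x y) ∧ (∀ v ∈ L, ∃ i, x i = v ∨ y i = v) ∧
      ∀ i, ∀ h : 2 * i + 1 < L.length, ∃ t, x t = L[2 * i] ∧ y t = L[2 * i + 1] := by
  set M := L ++ (Finset.univ.filter (· ∉ L)).toList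
  have hM : M.Nodup := List.nodup_append.mpr ⟨hL, Finset.nodup_toList _, fun v hv w hw => by
    rintro rfl; simp_all⟩
  have hMlen : M.length = Fintype.card V := by
    rw [← List.toFinset_card_of_nodup hM, ← Finset.card_univ]
    congr 1
    exact Finset.eq_univ_of_forall fun v => by by_cases hv : v ∈ L <;> simp [M, hv]
  have hget : ∀ m (hm : m < L.length), M[m]'(by simp [M]; omega) = L[m] := fun m hm =>
    List.getElem_append_left hm
  refine ⟨fun i => M[2 * (i : ℕ)], fun i => M[2 * (i : ℕ) + 1], ?_, ?_, fun i h =>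
    ⟨⟨i, by omega⟩, hget (2 * i) (by omega), hget _ h⟩⟩
  · rintro (i | i) (j | j) hij <;> have := hM.getElem_inj_iff.mp hij
    · exact congrArg Sum.inl (Fin.ext (by omega))
    · omega
    · omega
    · exact congrArg Sum.inr (Fin.ext (by omega))
  · intro v hv
    obtain ⟨m, hm, rfl⟩ := List.mem_iff_getElem.mp hv
    rcases Nat.even_or_odd' m with ⟨n, rfl | rfl⟩
    · exact ⟨⟨n, by omega⟩, .inl (hget _ hm)⟩
    · exact ⟨⟨n, by omega⟩, .inr (hget _ hm)⟩

section StarProduct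

variable {β γ : Type*}

theorem neighborSet_inr_inr_subset (i : β) (j : γ) :
    (completeBipartiteGraph (Fin 1) β □ completeBipartiteGraph (Fin 1) γ).neighborSet
      (.inr i, .inr j) ⊆ {(.inr i, .inl 0), (.inl 0, .inr j)} := by
  rintro ⟨a | i', b | j'⟩ h <;> simp_all [boxProd_adj, Fin.fin_one_eq_zero]

theorem exists_eq_inr_inr_of_adj_inr_inl {i : β} {w : (Fin 1 ⊕ β) × (Fin 1 ⊕ γ)}
    (h : (completeBipartiteGraph (Fin 1) β □ completeBipartiteGraph (Fin 1) γ).Adj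
      (.inr i, .inl 0) w) (hw : w ≠ (.inl 0, .inl 0)) : ∃ j, w = (.inr i, .inr j) := by
  rcases w with ⟨a | i', b | j'⟩ <;> simp_all [boxProd_adj, Fin.fin_one_eq_zero]

theorem exists_eq_inr_inr_of_adj_inl_inr {j : γ} {w : (Fin 1 ⊕ β) × (Fin 1 ⊕ γ)}
    (h : (completeBipartiteGraph (Fin 1) β □ completeBipartiteGraph (Fin 1) γ).Adj
      (.inl 0, .inr j) w) (hw : w ≠ (.inl 0, .inl 0)) : ∃ i, w = (.inr i, .inr j) := by
  rcases w with ⟨a | i', b | j'⟩ <;> simp_all [boxProd_adj, Fin.fin_one_eq_zero]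

theorem not_adj_inr_inl_inl_inr (i : β) (j : γ) :
    ¬ (completeBipartiteGraph (Fin 1) β □ completeBipartiteGraph (Fin 1) γ).Adj
      (.inr i, .inl 0) (.inl 0, .inr j) := by
  simp [boxProd_adj]

end StarProduct

theorem boxProd_stars_not_edgeDisjoint {β γ : Type*} {k : ℕ}
    {x y : Fin k → (Fin 1 ⊕ β) × (Fin 1 ⊕ γ)}
    {p : (t : Fin k) →
      (completeBipartiteGraph (Fin 1) β □ completeBipartiteGraph (Fin 1) γ).Walk (x t) (y t)}
    (hp : ∀ t, (p t).IsTrail) (hxy : ∀ t, x t ≠ y t) {i₀ : β} {j₀ : γ}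
    (hcorners : ∀ i j, i = i₀ ∨ j = j₀ → ∃ t, x t = (.inr i, .inr j) ∨ y t = (.inr i, .inr j))
    {t₀ t₁ : Fin k} (hx₀ : x t₀ = (.inl 0, .inl 0)) (hy₀ : y t₀ = (.inr i₀, .inr j₀))
    (hx₁ : x t₁ = (.inr i₀, .inl 0)) (hy₁ : y t₁ = (.inl 0, .inr j₀)) :
    ¬ ∀ s t, s ≠ t → (p s).edges.Disjoint (p t).edges := by
  intro hdisj
  have ht : t₀ ≠ t₁ := by
    rintro rfl
    simp [hx₀] at hx₁
  refine not_disjoint_edges_of_hub (P := (p t₀).copy hx₀ hy₀) (Q := (p t₁).copy hx₁ hy₁)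
    (by simpa using hp t₀) (by simp) (by simp) (by simp) (by simp)
    (neighborSet_inr_inr_subset _ _) (not_adj_inr_inl_inl_inr _ _) ?_
    (by simpa using hdisj t₀ t₁ ht)
  rintro u hu w hw hwc
  obtain ⟨i, j, hij, rfl⟩ : ∃ i j, (i = i₀ ∨ j = j₀) ∧ w = (.inr i, .inr j) := by
    rcases hu with rfl | rfl
    · obtain ⟨j, rfl⟩ := exists_eq_inr_inr_of_adj_inr_inl hw hwc
      exact ⟨i₀, j, .inl rfl, rfl⟩
    · obtain ⟨i, rfl⟩ := exists_eq_inr_inr_of_adj_inl_inr hw hwc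
      exact ⟨i, j₀, .inr rfl, rfl⟩
  have hcorner := fun t => eq_or_eq_of_mem_support_of_neighborSet_subset (t := t) hp hdisj hxy
    (neighborSet_inr_inr_subset i j) (hcorners i j hij)
  simp only [Walk.support_copy]
  exact ⟨fun h => hx₀ ▸ hy₀ ▸ hcorner t₀ h, fun h => hx₁ ▸ hy₁ ▸ hcorner t₁ h⟩

def starProductTerminals (b d : ℕ) : List ((Fin 1 ⊕ Fin (b + 1)) × (Fin 1 ⊕ Fin (d + 1))) :=
  [(.inl 0, .inl 0), (.inr 0, .inr 0), (.inr 0, .inl 0), (.inl 0, .inr 0)] ++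
    (List.finRange b).map (fun i => (.inr i.succ, .inr 0)) ++
    (List.finRange d).map (fun j => (.inr 0, .inr j.succ))

theorem starProductTerminals_nodup (b d : ℕ) : (starProductTerminals b d).Nodup := by
  simpa [starProductTerminals, List.nodup_append, Fin.succ_ne_zero] using
    ⟨(List.nodup_finRange b).map fun i j h => by simpa using h,
      (List.nodup_finRange d).map fun i j h => by simpa using h⟩

theorem inr_inr_mem_starProductTerminals {b d : ℕ} {i : Fin (b + 1)} {j : Fin (d + 1)}
    (hij : i = 0 ∨ j = 0) : (.inr i, .inr j) ∈ starProductTerminals b d := by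
  rcases hij with rfl | rfl
  · rcases j.eq_zero_or_eq_succ with rfl | ⟨j, rfl⟩ <;> simp [starProductTerminals]
  · rcases i.eq_zero_or_eq_succ with rfl | ⟨i, rfl⟩ <;> simp [starProductTerminals]

/-- The Cartesian product of the stars `K_{1,b}` and `K_{1,d}` is not
`(⌈(b+d)/2⌉ + 1)`-path-pairable. -/
theorem boxProd_stars_not_pathPairable (b d : ℕ) :
    ¬ PathPairable
        (completeBipartiteGraph (Fin 1) (Fin b) □ completeBipartiteGraph (Fin 1) (Fin d))
        ((b + d + 1) / 2 + 1) := by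
  rintro ⟨hcard, hpairs⟩
  have hsize : 2 * ((b + d + 1) / 2 + 1) ≤ (1 + b) * (1 + d) := by simpa using hcard
  rcases b with _ | b
  · omega
  rcases d with _ | d
  · omega
  obtain ⟨x, y, hinj, hterm, hpair⟩ := exists_injective_sumElim_of_nodup
    (starProductTerminals_nodup b d) hcard (by simp [starProductTerminals]; omega)
  obtain ⟨p, hp, hdisj⟩ := hpairs x y hinj
  obtain ⟨t₀, hx₀, hy₀⟩ : ∃ t, x t = (.inl 0, .inl 0) ∧ y t = (.inr 0, .inr 0) := by
    simpa [starProductTerminals] using hpair 0 (by simp [starProductTerminals])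
  obtain ⟨t₁, hx₁, hy₁⟩ : ∃ t, x t = (.inr 0, .inl 0) ∧ y t = (.inl 0, .inr 0) := by
    simpa [starProductTerminals] using hpair 1 (by simp [starProductTerminals])
  exact boxProd_stars_not_edgeDisjoint (fun t => (hp t).isTrail)
    (fun t h => Sum.inl_ne_inr (hinj h))
    (fun i j hij => hterm _ (inr_inr_mem_starProductTerminals hij)) hx₀ hy₀ hx₁ hy₁ hdisj
end
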